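/- arXiv:1705.02121 — 2 statements merged into one kernel-verified Lean document; each statement's English description precedes it below -/
import Mathlib

section
/- Consider the two-state exponential zig-zag process (X_t, I_t) on [0,1]×{1,2} with generator L f(x,i) = (1_{i=1} − x) ∂_x f(x,i) + a θ_{3−i}[f(x,3−i) − f(x,i)], where a, θ_1, θ_2 > 0. The probability measure π = (θ_1/(θ_1+θ_2)) β(aθ_1+1, aθ_2) ⊗ δ_1 + (θ_2/(θ_1+θ_2)) β(aθ_1, aθ_2+1) ⊗ δ_2 is stationary for this process, i.e. ∫ L f dπ = 0 for all f that are C¹ in x. -/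
open MeasureTheory

/-- The Beta distribution `β(α,γ)` on `[0,1]`, with density
`x^{α-1} (1-x)^{γ-1} Γ(α+γ)/(Γ(α)Γ(γ))` with respect to Lebesgue measure. -/
noncomputable def betaMeas (α γ : ℝ) : Measure ℝ :=
  (volume.restrict (Set.Ioo (0:ℝ) 1)).withDensity
    (fun x => ENNReal.ofReal
      (x ^ (α - 1) * (1 - x) ^ (γ - 1) * Real.Gamma (α + γ) / (Real.Gamma α * Real.Gamma γ)))

/-!
Write `p = aθ₁`, `q = aθ₂`. Size-biasing gives `θ₁/(θ₁+θ₂) β(p+1,q)(dx) = x β(p,q)(dx)` and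
`θ₂/(θ₁+θ₂) β(p,q+1)(dx) = (1-x) β(p,q)(dx)`, so `∫ L f dπ = ∫ (x L f(x,1) + (1-x) L f(x,2)) dβ(p,q)`.
In this combination the integrand only involves `g = f(·,1) - f(·,2)`: it is
`x(1-x) g' + (p(1-x) - qx) g`, the Jacobi generator applied to `g`. Multiplied by the density
`x^{p-1}(1-x)^{q-1}` it becomes the derivative of `x^p (1-x)^q g`, which vanishes at `0` and `1`.
-/

open Set

section JacobiWeight

variable {p q : ℝ}

theorem integrableOn_rpow_mul_one_sub_rpow (hp : 0 < p) (hq : 0 < q) :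
    IntegrableOn (fun x : ℝ => x ^ (p - 1) * (1 - x) ^ (q - 1)) (Ioo 0 1) := by
  have hC : IntegrableOn
      (fun x : ℝ => (x : ℂ) ^ ((p : ℂ) - 1) * (1 - (x : ℂ)) ^ ((q : ℂ) - 1)) (Ioo 0 1) :=
    (intervalIntegrable_iff_integrableOn_Ioo_of_le zero_le_one).1
      (Complex.betaIntegral_convergent (by simpa) (by simpa))
  refine (integrableOn_congr_fun (fun x hx => ?_) measurableSet_Ioo).1 hC.re
  have h1 : (0 : ℝ) ≤ 1 - x := sub_nonneg.2 hx.2.le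
  have hreal : (x : ℂ) ^ ((p : ℂ) - 1) * (1 - (x : ℂ)) ^ ((q : ℂ) - 1)
      = ((x ^ (p - 1) * (1 - x) ^ (q - 1) : ℝ) : ℂ) := by
    rw [Complex.ofReal_mul, Complex.ofReal_cpow hx.1.le, Complex.ofReal_cpow h1]
    push_cast
    rfl
  simp only [hreal, RCLike.re_to_complex, Complex.ofReal_re]

theorem integrableOn_rpow_mul_one_sub_rpow_mul (hp : 0 < p) (hq : 0 < q) {G : ℝ → ℝ}
    (hG : Continuous G) :
    IntegrableOn (fun x : ℝ => x ^ (p - 1) * (1 - x) ^ (q - 1) * G x) (Ioo 0 1) :=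
  (integrableOn_rpow_mul_one_sub_rpow hp hq).mul_continuousOn_of_subset hG.continuousOn
    measurableSet_Ioo isCompact_Icc Ioo_subset_Icc_self

theorem hasDerivAt_rpow_mul_one_sub_rpow_mul {g : ℝ → ℝ} {g' x : ℝ} (hg : HasDerivAt g g' x)
    (hx : x ∈ Ioo (0 : ℝ) 1) :
    HasDerivAt (fun x : ℝ => x ^ p * (1 - x) ^ q * g x)
      (x ^ (p - 1) * (1 - x) ^ (q - 1) * (x * (1 - x) * g' + (p * (1 - x) - q * x) * g x)) x := by
  have hx₀ : x ≠ 0 := hx.1.ne'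
  have hx₁ : 1 - x ≠ 0 := (sub_pos.2 hx.2).ne'
  have hl : HasDerivAt (fun x : ℝ => x ^ p) (p * x ^ (p - 1)) x :=
    Real.hasDerivAt_rpow_const (Or.inl hx₀)
  have hr : HasDerivAt (fun x : ℝ => (1 - x) ^ q) (q * (1 - x) ^ (q - 1) * -1) x :=
    (Real.hasDerivAt_rpow_const (Or.inl hx₁)).comp x ((hasDerivAt_id x).const_sub 1)
  refine ((hl.mul hr).mul hg).congr_deriv ?_
  simp only [Pi.mul_apply]
  rw [Real.rpow_sub_one hx₀, Real.rpow_sub_one hx₁]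
  field_simp
  ring

theorem integral_rpow_mul_one_sub_rpow_mul_jacobi_eq_zero (hp : 0 < p) (hq : 0 < q)
    {g g' : ℝ → ℝ} (hg : ∀ x, HasDerivAt g (g' x) x) (hg' : Continuous g') :
    ∫ x in Ioo 0 1, x ^ (p - 1) * (1 - x) ^ (q - 1)
      * (x * (1 - x) * g' x + (p * (1 - x) - q * x) * g x) = 0 := by
  have hg_cont : Continuous g := continuous_iff_continuousAt.2 fun x => (hg x).continuousAt
  have hF_cont : Continuous fun x : ℝ => x ^ p * (1 - x) ^ q * g x := by
    have := Real.continuous_rpow_const hp.le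
    have := Real.continuous_rpow_const hq.le
    fun_prop
  have hint := integrableOn_rpow_mul_one_sub_rpow_mul hp hq
    (G := fun x => x * (1 - x) * g' x + (p * (1 - x) - q * x) * g x) (by fun_prop)
  have hFTC := intervalIntegral.integral_eq_sub_of_hasDerivAt_of_le zero_le_one
    hF_cont.continuousOn (fun x hx => hasDerivAt_rpow_mul_one_sub_rpow_mul (hg x) hx)
    ((intervalIntegrable_iff_integrableOn_Ioo_of_le zero_le_one).2 hint)
  rw [intervalIntegral.integral_of_le zero_le_one, integral_Ioc_eq_integral_Ioo] at hFTC
  simpa [Real.zero_rpow hp.ne', Real.zero_rpow hq.ne'] using hFTC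

end JacobiWeight

section BetaMeas

/-- The density of `betaMeas α γ` on `(0,1)`, written exactly as in `betaMeas`. -/
noncomputable def betaDensity (α γ x : ℝ) : ℝ :=
  x ^ (α - 1) * (1 - x) ^ (γ - 1) * Real.Gamma (α + γ) / (Real.Gamma α * Real.Gamma γ)

variable {α γ p q x : ℝ}

instance (α γ : ℝ) : SFinite (betaMeas α γ) := by
  unfold betaMeas
  infer_instance

theorem betaDensity_eq_mul (α γ x : ℝ) :
    betaDensity α γ x = Real.Gamma (α + γ) / (Real.Gamma α * Real.Gamma γ)
      * (x ^ (α - 1) * (1 - x) ^ (γ - 1)) := by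
  rw [betaDensity]
  ring

theorem betaDensity_nonneg (hα : 0 < α) (hγ : 0 < γ) (hx : x ∈ Ioo (0 : ℝ) 1) :
    0 ≤ betaDensity α γ x := by
  have := Real.Gamma_pos_of_pos hα
  have := Real.Gamma_pos_of_pos hγ
  have := Real.Gamma_pos_of_pos (add_pos hα hγ)
  have := Real.rpow_nonneg hx.1.le (α - 1)
  have := Real.rpow_nonneg (sub_nonneg.2 hx.2.le) (γ - 1)
  rw [betaDensity]
  positivity

theorem integral_betaMeas (hα : 0 < α) (hγ : 0 < γ) (g : ℝ → ℝ) :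
    ∫ x, g x ∂betaMeas α γ = ∫ x in Ioo 0 1, betaDensity α γ x * g x := by
  rw [betaMeas, integral_withDensity_eq_integral_toReal_smul (by fun_prop)
    (.of_forall fun _ => ENNReal.ofReal_lt_top)]
  refine setIntegral_congr_fun measurableSet_Ioo fun x hx => ?_
  rw [← betaDensity, ENNReal.toReal_ofReal (betaDensity_nonneg hα hγ hx), smul_eq_mul]

theorem integrable_betaMeas (hα : 0 < α) (hγ : 0 < γ) {g : ℝ → ℝ} (hg : Continuous g) :
    Integrable g (betaMeas α γ) := by
  rw [betaMeas, integrable_withDensity_iff_integrable_smul' (by fun_prop)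
    (.of_forall fun _ => ENNReal.ofReal_lt_top)]
  refine IntegrableOn.congr_fun ((integrableOn_rpow_mul_one_sub_rpow_mul hα hγ hg).const_mul
    (Real.Gamma (α + γ) / (Real.Gamma α * Real.Gamma γ))) (fun x hx => ?_) measurableSet_Ioo
  rw [← betaDensity, ENNReal.toReal_ofReal (betaDensity_nonneg hα hγ hx), smul_eq_mul,
    betaDensity_eq_mul]
  ring

theorem div_add_mul_betaDensity_add_one_left (hp : 0 < p) (hq : 0 < q) (hx : 0 < x) :
    p / (p + q) * betaDensity (p + 1) q x = x * betaDensity p q x := by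
  have hpq : 0 < p + q := add_pos hp hq
  rw [betaDensity, betaDensity, add_sub_cancel_right, add_right_comm, Real.Gamma_add_one hpq.ne',
    Real.Gamma_add_one hp.ne', Real.rpow_sub_one hx.ne']
  have := Real.Gamma_pos_of_pos hp
  have := Real.Gamma_pos_of_pos hq
  field_simp

theorem div_add_mul_betaDensity_add_one_right (hp : 0 < p) (hq : 0 < q) (hx : x < 1) :
    q / (p + q) * betaDensity p (q + 1) x = (1 - x) * betaDensity p q x := by
  have hpq : 0 < p + q := add_pos hp hq
  rw [betaDensity, betaDensity, add_sub_cancel_right, ← add_assoc, Real.Gamma_add_one hpq.ne',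
    Real.Gamma_add_one hq.ne', Real.rpow_sub_one (sub_pos.2 hx).ne']
  have := Real.Gamma_pos_of_pos hp
  have := Real.Gamma_pos_of_pos hq
  have := sub_pos.2 hx
  field_simp

theorem div_add_mul_integral_betaMeas_add_one_left (hp : 0 < p) (hq : 0 < q) (g : ℝ → ℝ) :
    p / (p + q) * ∫ x, g x ∂betaMeas (p + 1) q = ∫ x, x * g x ∂betaMeas p q := by
  rw [integral_betaMeas (by linarith) hq, integral_betaMeas hp hq, ← integral_const_mul]
  refine setIntegral_congr_fun measurableSet_Ioo fun x hx => ?_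
  rw [← mul_assoc, div_add_mul_betaDensity_add_one_left hp hq hx.1]
  ring

theorem div_add_mul_integral_betaMeas_add_one_right (hp : 0 < p) (hq : 0 < q) (g : ℝ → ℝ) :
    q / (p + q) * ∫ x, g x ∂betaMeas p (q + 1) = ∫ x, (1 - x) * g x ∂betaMeas p q := by
  rw [integral_betaMeas hp (by linarith), integral_betaMeas hp hq, ← integral_const_mul]
  refine setIntegral_congr_fun measurableSet_Ioo fun x hx => ?_
  rw [← mul_assoc, div_add_mul_betaDensity_add_one_right hp hq hx.2]
  ring

theorem integral_betaMeas_jacobi_eq_zero (hp : 0 < p) (hq : 0 < q) {g g' : ℝ → ℝ}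
    (hg : ∀ x, HasDerivAt g (g' x) x) (hg' : Continuous g') :
    ∫ x, (x * (1 - x) * g' x + (p * (1 - x) - q * x) * g x) ∂betaMeas p q = 0 := by
  simp_rw [integral_betaMeas hp hq, betaDensity_eq_mul, mul_assoc, integral_const_mul]
  simp_rw [← mul_assoc, integral_rpow_mul_one_sub_rpow_mul_jacobi_eq_zero hp hq hg hg', mul_zero]

end BetaMeas

section ProdDirac

variable {X ι : Type*} [MeasurableSpace X] [MeasurableSpace ι] [MeasurableSingletonClass ι]
  (μ : Measure X) [SFinite μ] (i : ι) {h : X × ι → ℝ}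

theorem integral_prod_dirac (h : X × ι → ℝ) :
    ∫ z, h z ∂μ.prod (Measure.dirac i) = ∫ x, h (x, i) ∂μ := by
  rw [Measure.prod_dirac, (measurableEmbedding_prod_mk_right i).integral_map]

theorem integrable_prod_dirac_iff :
    Integrable h (μ.prod (Measure.dirac i)) ↔ Integrable (fun x => h (x, i)) μ := by
  rw [Measure.prod_dirac, (measurableEmbedding_prod_mk_right i).integrable_map_iff]
  rfl

theorem integral_smul_prod_dirac_add_smul_prod_dirac (ν : Measure X) [SFinite ν] (j : ι)
    {c d : ℝ} (hc : 0 ≤ c) (hd : 0 ≤ d) (hμ : Integrable (fun x => h (x, i)) μ)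
    (hν : Integrable (fun x => h (x, j)) ν) :
    ∫ z, h z ∂(ENNReal.ofReal c • μ.prod (Measure.dirac i)
        + ENNReal.ofReal d • ν.prod (Measure.dirac j))
      = c * ∫ x, h (x, i) ∂μ + d * ∫ x, h (x, j) ∂ν := by
  rw [integral_add_measure (((integrable_prod_dirac_iff μ i).2 hμ).smul_measure
      ENNReal.ofReal_ne_top) (((integrable_prod_dirac_iff ν j).2 hν).smul_measure
      ENNReal.ofReal_ne_top),
    integral_smul_measure, integral_smul_measure, integral_prod_dirac, integral_prod_dirac,
    ENNReal.toReal_ofReal hc, ENNReal.toReal_ofReal hd, smul_eq_mul, smul_eq_mul]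

end ProdDirac

/-- **Stationarity of the Beta mixture for the two-state exponential zig-zag process.**
For the generator `L f (x,i) = (1_{i=1} - x) ∂ₓ f(x,i) + a θ_{3-i} [f(x,3-i) - f(x,i)]`
on `[0,1] × {1,2}` (states indexed by `Fin 2`, state `1` being `0` and `3-i` being `1-i`),
the measure `π = θ₁/(θ₁+θ₂) β(aθ₁+1, aθ₂) ⊗ δ₁ + θ₂/(θ₁+θ₂) β(aθ₁, aθ₂+1) ⊗ δ₂`
satisfies `∫ L f dπ = 0` for every `f` that is C¹ in `x`. -/
theorem beta_mixture_stationary_zigzag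
    (a : ℝ) (ha : 0 < a) (θ : Fin 2 → ℝ) (hθ : ∀ i, 0 < θ i)
    (π : Measure (ℝ × Fin 2))
    (hπ : π = (ENNReal.ofReal (θ 0 / (θ 0 + θ 1))) •
            ((betaMeas (a * θ 0 + 1) (a * θ 1)).prod (Measure.dirac (0 : Fin 2)))
        + (ENNReal.ofReal (θ 1 / (θ 0 + θ 1))) •
            ((betaMeas (a * θ 0) (a * θ 1 + 1)).prod (Measure.dirac (1 : Fin 2))))
    (L : (ℝ → Fin 2 → ℝ) → ℝ × Fin 2 → ℝ)
    (hL : ∀ f z, L f z = ((if z.2 = 0 then (1:ℝ) else 0) - z.1)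
            * deriv (fun x => f x z.2) z.1
        + a * θ (1 - z.2) * (f z.1 (1 - z.2) - f z.1 z.2)) :
    ∀ f : ℝ → Fin 2 → ℝ, (∀ i, ContDiff ℝ 1 (fun x => f x i)) →
      ∫ z, L f z ∂π = 0 := by
  intro f hf
  set p := a * θ 0
  set q := a * θ 1
  have hp : 0 < p := mul_pos ha (hθ 0)
  have hq : 0 < q := mul_pos ha (hθ 1)
  have hweights : θ 0 / (θ 0 + θ 1) = p / (p + q) ∧ θ 1 / (θ 0 + θ 1) = q / (p + q) := by
    simp only [p, q, ← mul_add, mul_div_mul_left _ _ ha.ne', and_self]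
  have hderiv i x : HasDerivAt (f · i) (deriv (f · i) x) x :=
    ((hf i).differentiable one_ne_zero x).hasDerivAt
  have hderiv_cont i : Continuous (deriv (f · i)) := (hf i).continuous_deriv le_rfl
  have hLf_cont i : Continuous fun x => L f (x, i) := by
    simp only [hL]
    exact ((continuous_const (y := if i = 0 then (1 : ℝ) else 0)).sub continuous_id
      |>.mul (hderiv_cont i)).add
      (continuous_const.mul ((hf (1 - i)).continuous.sub (hf i).continuous))
  calc ∫ z, L f z ∂π
      = p / (p + q) * ∫ x, L f (x, 0) ∂betaMeas (p + 1) q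
        + q / (p + q) * ∫ x, L f (x, 1) ∂betaMeas p (q + 1) := by
        rw [hπ, hweights.1, hweights.2]
        exact integral_smul_prod_dirac_add_smul_prod_dirac _ _ _ _
          (div_pos hp (add_pos hp hq)).le (div_pos hq (add_pos hp hq)).le
          (integrable_betaMeas (by linarith) hq (hLf_cont 0))
          (integrable_betaMeas hp (by linarith) (hLf_cont 1))
    _ = ∫ x, (x * L f (x, 0) + (1 - x) * L f (x, 1)) ∂betaMeas p q := by
        rw [div_add_mul_integral_betaMeas_add_one_left hp hq,
          div_add_mul_integral_betaMeas_add_one_right hp hq]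
        exact (integral_add (integrable_betaMeas hp hq (continuous_id.mul (hLf_cont 0)))
          (integrable_betaMeas hp hq ((continuous_const.sub continuous_id).mul (hLf_cont 1)))).symm
    _ = ∫ x, (x * (1 - x) * (deriv (f · 0) x - deriv (f · 1) x)
          + (p * (1 - x) - q * x) * (f x 0 - f x 1)) ∂betaMeas p q := by
        congr 1 with x
        simp only [Fin.isValue, hL, ↓reduceIte, sub_zero, one_ne_zero, zero_sub, neg_mul, sub_self]
        ring
    _ = 0 := integral_betaMeas_jacobi_eq_zero hp hq (fun x => (hderiv 0 x).sub (hderiv 1 x))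
        ((hderiv_cont 0).sub (hderiv_cont 1))
end

section
/- Let (X,I) be the exponential zig-zag process on Δ×{1,…,D} with generator L f(x,i) = (e_i − x)·∇_x f(x,i) + a ∑_{j≠i} q(i,j)[f(x,j) − f(x,i)], and let π be its stationary distribution with marginal mean ∫ x_k dπ = ν_k. Then for each k, ∫_E (x_k − ν_k)² π(dx,di) = a^{-1}( h_{k,k} ν_k − ∫_E x_k h_{k,i} π(dx,di) ), where h solves the Poisson equation ∑_{j≠i} q(i,j)(h_{k,j} − h_{k,i}) = ν_k − 1_{i=k}. Consequently ∫_E |x − ν|²_2 π(dx,di) ≤ C/a with C = ∑_k h_{k,k} ν_k − min_{i,j} h_{i,j}. -/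
open Finset MeasureTheory

lemma fderiv_proj_aux (D : ℕ) (k m : Fin D) (x : Fin D → ℝ) :
    fderiv ℝ (fun x : Fin D → ℝ => x k) x (Pi.single m 1)
      = (Pi.single m 1 : Fin D → ℝ) k := by
  have hproj : HasFDerivAt (fun x : Fin D → ℝ => x k)
      ((ContinuousLinearMap.proj k : (Fin D → ℝ) →L[ℝ] ℝ)) x :=
    (ContinuousLinearMap.proj k : (Fin D → ℝ) →L[ℝ] ℝ).hasFDerivAt
  rw [hproj.fderiv]; rfl

lemma fderiv_quad_aux (D : ℕ) (k : Fin D) (c : ℝ) (x : Fin D → ℝ) (m : Fin D) :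
    fderiv ℝ (fun x : Fin D → ℝ => x k * x k + c * x k) x (Pi.single m 1)
      = (2 * x k + c) * (Pi.single m 1 : Fin D → ℝ) k := by
  have hproj : HasFDerivAt (fun x : Fin D → ℝ => x k)
      ((ContinuousLinearMap.proj k : (Fin D → ℝ) →L[ℝ] ℝ)) x :=
    (ContinuousLinearMap.proj k : (Fin D → ℝ) →L[ℝ] ℝ).hasFDerivAt
  have hf := (hproj.mul hproj).add (hproj.const_mul c)
  rw [HasFDerivAt.fderiv (f := fun x : Fin D → ℝ => x k * x k + c * x k) hf]
  simp
  ring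

lemma contdiff_quad_aux (D : ℕ) (k : Fin D) (c : ℝ) :
    ContDiff ℝ (⊤ : ℕ∞) (fun x : Fin D → ℝ => x k * x k + c * x k) := by
  have hp : ContDiff ℝ (⊤ : ℕ∞) (fun x : Fin D → ℝ => x k) :=
    (ContinuousLinearMap.proj k : (Fin D → ℝ) →L[ℝ] ℝ).contDiff
  exact (hp.mul hp).add (contDiff_const.mul hp)

/-- **Second-moment identity for the stationary law of the exponential zig-zag process.**
Let `π` be the stationary distribution of the zig-zag process on `Δ × {1,…,D}` with
generator `L f (x,i) = (e_i - x)·∇ₓ f(x,i) + a ∑_{j≠i} q i j (f(x,j) - f(x,i))`, with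
marginal means `∫ x_k dπ = ν_k`, and let `h` solve the Poisson equation
`∑_{j≠i} q i j (h k j - h k i) = ν k - 1_{i=k}`. Then
`∫ (x_k - ν_k)² dπ = a⁻¹ (h k k ν k - ∫ x_k h k i dπ)` for each `k`, and consequently
`∫ ‖x - ν‖₂² dπ ≤ C/a` with `C = ∑_k h k k ν k - min_{i,j} h i j`. -/
theorem zigzag_stationary_second_moment
    (D : ℕ) (hD : 1 ≤ D) (a : ℝ) (ha : 0 < a)
    (q : Fin D → Fin D → ℝ) (hq_offdiag : ∀ i j, i ≠ j → 0 ≤ q i j)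
    (hq_rows : ∀ i, ∑ j, q i j = 0)
    (ν : Fin D → ℝ) (hν_nonneg : ∀ i, 0 ≤ ν i) (hν_sum : ∑ i, ν i = 1)
    (hν_inv : ∀ j, ∑ i, ν i * q i j = 0)
    (h : Fin D → Fin D → ℝ)
    (hPoisson : ∀ k i, ∑ j ∈ Finset.univ.erase i, q i j * (h k j - h k i)
      = ν k - (if i = k then 1 else 0))
    (π : Measure ((Fin D → ℝ) × Fin D)) [IsProbabilityMeasure π]
    (hsupp : ∀ᵐ z ∂π, (∀ k, 0 ≤ z.1 k) ∧ (∑ k, z.1 k) = 1)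
    (hstat : ∀ f : (Fin D → ℝ) × Fin D → ℝ,
      (∀ i, ContDiff ℝ (⊤ : ℕ∞) (fun x => f (x, i))) →
      ∫ z, ((∑ k, ((if z.2 = k then (1:ℝ) else 0) - z.1 k)
              * fderiv ℝ (fun x => f (x, z.2)) z.1 (Pi.single k 1))
          + a * ∑ j ∈ Finset.univ.erase z.2, q z.2 j * (f (z.1, j) - f (z.1, z.2))) ∂π
        = 0)
    (hmean : ∀ k, ∫ z, z.1 k ∂π = ν k) :
    (∀ k, ∫ z, (z.1 k - ν k) ^ 2 ∂π
        = a⁻¹ * (h k k * ν k - ∫ z, z.1 k * h k z.2 ∂π))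
    ∧ ∫ z, (∑ k, (z.1 k - ν k) ^ 2) ∂π
        ≤ ((∑ k, h k k * ν k) - ⨅ i : Fin D, ⨅ j : Fin D, h i j) / a := by
  have hDne : Nonempty (Fin D) := ⟨⟨0, hD⟩⟩
  -- a.e. bounds
  have hbd : ∀ᵐ z ∂π, ∀ k, 0 ≤ z.1 k ∧ z.1 k ≤ 1 := by
    filter_upwards [hsupp] with z hz k
    refine ⟨hz.1 k, ?_⟩
    calc z.1 k ≤ ∑ j, z.1 j := Finset.single_le_sum (fun j _ => hz.1 j) (mem_univ k)
    _ = 1 := hz.2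
  -- measurability
  have mx : ∀ k, Measurable fun z : (Fin D → ℝ) × Fin D => z.1 k :=
    fun k => (measurable_pi_apply k).comp measurable_fst
  have mh : ∀ k, Measurable fun z : (Fin D → ℝ) × Fin D => h k z.2 :=
    fun k => (measurable_of_countable _).comp measurable_snd
  have mind : ∀ k, Measurable fun z : (Fin D → ℝ) × Fin D =>
      (if z.2 = k then (1:ℝ) else 0) :=
    fun k => (measurable_of_countable (fun i : Fin D => if i = k then (1:ℝ) else 0)).comp
      measurable_snd
  -- integrability helper
  have key : ∀ g : ((Fin D → ℝ) × Fin D) → ℝ, Measurable g →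
      (∃ C, ∀ᵐ z ∂π, |g z| ≤ C) → Integrable g π := by
    rintro g hg ⟨C, hC⟩
    exact (integrable_const C).mono' hg.aestronglyMeasurable hC
  have I1 : ∀ k, Integrable (fun z : (Fin D → ℝ) × Fin D => z.1 k) π := by
    intro k
    refine key _ (mx k) ⟨1, ?_⟩
    filter_upwards [hbd] with z hz
    rw [abs_le]; constructor <;> linarith [(hz k).1, (hz k).2]
  have I2 : ∀ k, Integrable (fun z : (Fin D → ℝ) × Fin D => z.1 k * z.1 k) π := by
    intro k
    refine key _ ((mx k).mul (mx k)) ⟨1, ?_⟩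
    filter_upwards [hbd] with z hz
    rw [abs_mul]
    calc |z.1 k| * |z.1 k| ≤ 1 * 1 := by
          apply mul_le_mul <;>
            first
              | (rw [abs_le]; constructor <;> linarith [(hz k).1, (hz k).2])
              | positivity
              | norm_num
    _ = 1 := by norm_num
  have I3 : ∀ k, Integrable (fun z : (Fin D → ℝ) × Fin D => z.1 k * h k z.2) π := by
    intro k
    refine key _ ((mx k).mul (mh k)) ⟨∑ i, |h k i|, ?_⟩
    filter_upwards [hbd] with z hz
    rw [abs_mul]
    calc |z.1 k| * |h k z.2| ≤ 1 * |h k z.2| := by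
          apply mul_le_mul_of_nonneg_right _ (abs_nonneg _)
          rw [abs_le]; constructor <;> linarith [(hz k).1, (hz k).2]
    _ = |h k z.2| := one_mul _
    _ ≤ ∑ i, |h k i| :=
      Finset.single_le_sum (f := fun i => |h k i|) (fun i _ => abs_nonneg _) (mem_univ z.2)
  have I4 : ∀ k, Integrable (fun z : (Fin D → ℝ) × Fin D =>
      (if z.2 = k then (1:ℝ) else 0)) π := by
    intro k
    refine key _ (mind k) ⟨1, .of_forall fun z => ?_⟩
    split <;> simp
  -- Step B : ∫ 1_{i=k} = ν k
  have hind : ∀ k, ∫ z, (if z.2 = k then (1:ℝ) else 0) ∂π = ν k := by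
    intro k
    have hcd : ∀ i : Fin D, ContDiff ℝ (⊤ : ℕ∞)
        (fun x : Fin D → ℝ => (fun z : (Fin D → ℝ) × Fin D => z.1 k) (x, i)) :=
      fun i => (ContinuousLinearMap.proj k : (Fin D → ℝ) →L[ℝ] ℝ).contDiff
    have H := hstat (fun z => z.1 k) hcd
    have hpt : ∀ z : (Fin D → ℝ) × Fin D,
        ((∑ m, ((if z.2 = m then (1:ℝ) else 0) - z.1 m)
            * fderiv ℝ (fun x => (fun z : (Fin D → ℝ) × Fin D => z.1 k) (x, z.2)) z.1
                (Pi.single m 1))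
          + a * ∑ j ∈ Finset.univ.erase z.2, q z.2 j * (z.1 k - z.1 k))
        = (if z.2 = k then (1:ℝ) else 0) - z.1 k := by
      intro z
      simp only [fderiv_proj_aux, sub_self, mul_zero, Finset.sum_const_zero, add_zero]
      rw [Finset.sum_eq_single k]
      · simp
      · intro m _ hmk
        simp [Pi.single_apply, Ne.symm hmk]
      · simp
    have H2 : ∫ z, ((if z.2 = k then (1:ℝ) else 0) - z.1 k) ∂π = 0 :=
      (integral_congr_ae (.of_forall fun z => (hpt z).symm)).trans H
    have := integral_sub (I4 k) (I1 k)
    rw [H2] at this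
    rw [hmean k] at this
    linarith [this]
  -- Step C : second moment identity
  have part1 : ∀ k, ∫ z, (z.1 k - ν k) ^ 2 ∂π
      = a⁻¹ * (h k k * ν k - ∫ z, z.1 k * h k z.2 ∂π) := by
    intro k
    set f : (Fin D → ℝ) × Fin D → ℝ :=
      fun z => z.1 k * z.1 k + 2 / a * h k z.2 * z.1 k with hf
    have hcd : ∀ i : Fin D, ContDiff ℝ (⊤ : ℕ∞) (fun x : Fin D → ℝ => f (x, i)) :=
      fun i => contdiff_quad_aux D k (2 / a * h k i)
    have H := hstat f hcd
    -- pointwise computation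
    have hpt : ∀ z : (Fin D → ℝ) × Fin D,
        ((∑ m, ((if z.2 = m then (1:ℝ) else 0) - z.1 m)
            * fderiv ℝ (fun x => f (x, z.2)) z.1 (Pi.single m 1))
          + a * ∑ j ∈ Finset.univ.erase z.2, q z.2 j * (f (z.1, j) - f (z.1, z.2)))
        = 2 / a * h k k * (if z.2 = k then (1:ℝ) else 0)
            - 2 * (z.1 k * z.1 k) - 2 / a * (z.1 k * h k z.2)
            + 2 * ν k * z.1 k := by
      intro z
      have hderiv : ∀ m, fderiv ℝ (fun x => f (x, z.2)) z.1 (Pi.single m 1)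
          = (2 * z.1 k + 2 / a * h k z.2) * (Pi.single m 1 : Fin D → ℝ) k :=
        fun m => fderiv_quad_aux D k (2 / a * h k z.2) z.1 m
      simp only [hderiv]
      have hsum1 : (∑ m, ((if z.2 = m then (1:ℝ) else 0) - z.1 m)
          * ((2 * z.1 k + 2 / a * h k z.2) * (Pi.single m 1 : Fin D → ℝ) k))
          = ((if z.2 = k then (1:ℝ) else 0) - z.1 k)
            * (2 * z.1 k + 2 / a * h k z.2) := by
        rw [Finset.sum_eq_single k]
        · simp [Pi.single_apply]
        · intro m _ hmk
          simp [Pi.single_apply, Ne.symm hmk]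
        · simp
      rw [hsum1]
      have hsum2 : (∑ j ∈ Finset.univ.erase z.2, q z.2 j * (f (z.1, j) - f (z.1, z.2)))
          = 2 / a * z.1 k * (ν k - (if z.2 = k then (1:ℝ) else 0)) := by
        rw [← hPoisson k z.2, Finset.mul_sum]
        refine Finset.sum_congr rfl fun j _ => ?_
        simp only [hf]
        ring
      rw [hsum2]
      by_cases hz : z.2 = k
      · simp only [hz, if_pos rfl]
        field_simp
        ring
      · simp only [if_neg hz]
        field_simp
        ring
    have H2 : ∫ z, (2 / a * h k k * (if z.2 = k then (1:ℝ) else 0)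
        - 2 * (z.1 k * z.1 k) - 2 / a * (z.1 k * h k z.2)
        + 2 * ν k * z.1 k) ∂π = 0 :=
      (integral_congr_ae (.of_forall fun z => (hpt z).symm)).trans H
    -- linearity
    have e1 : ∫ z, (2 / a * h k k * (if z.2 = k then (1:ℝ) else 0)
        - 2 * (z.1 k * z.1 k) - 2 / a * (z.1 k * h k z.2)
        + 2 * ν k * z.1 k) ∂π
        = 2 / a * h k k * ν k - 2 * (∫ z, z.1 k * z.1 k ∂π)
          - 2 / a * (∫ z, z.1 k * h k z.2 ∂π) + 2 * ν k * ν k := by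
      have J1 : Integrable (fun z : (Fin D → ℝ) × Fin D =>
          2 / a * h k k * (if z.2 = k then (1:ℝ) else 0)) π := (I4 k).const_mul _
      have J2 : Integrable (fun z : (Fin D → ℝ) × Fin D => 2 * (z.1 k * z.1 k)) π :=
        (I2 k).const_mul 2
      have J3 : Integrable (fun z : (Fin D → ℝ) × Fin D =>
          2 / a * (z.1 k * h k z.2)) π := (I3 k).const_mul _
      have J4 : Integrable (fun z : (Fin D → ℝ) × Fin D => 2 * ν k * z.1 k) π :=
        (I1 k).const_mul _
      have J12 : Integrable (fun z : (Fin D → ℝ) × Fin D =>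
          2 / a * h k k * (if z.2 = k then (1:ℝ) else 0) - 2 * (z.1 k * z.1 k)) π :=
        J1.sub J2
      have J123 : Integrable (fun z : (Fin D → ℝ) × Fin D =>
          2 / a * h k k * (if z.2 = k then (1:ℝ) else 0) - 2 * (z.1 k * z.1 k)
            - 2 / a * (z.1 k * h k z.2)) π := J12.sub J3
      rw [integral_add J123 J4, integral_sub J12 J3, integral_sub J1 J2,
        integral_const_mul, integral_const_mul, integral_const_mul, integral_const_mul,
        hind k, hmean k]
    rw [e1] at H2
    have expand : ∫ z, (z.1 k - ν k) ^ 2 ∂π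
        = (∫ z, z.1 k * z.1 k ∂π) - ν k * ν k := by
      have hpt2 : ∀ z : (Fin D → ℝ) × Fin D,
          (z.1 k - ν k) ^ 2 = (z.1 k * z.1 k - 2 * ν k * z.1 k) + ν k * ν k := by
        intro z; ring
      rw [show (fun z : (Fin D → ℝ) × Fin D => (z.1 k - ν k) ^ 2)
          = fun z => (z.1 k * z.1 k - 2 * ν k * z.1 k) + ν k * ν k from funext hpt2]
      have K1 : Integrable (fun z : (Fin D → ℝ) × Fin D => 2 * ν k * z.1 k) π :=
        (I1 k).const_mul _
      have K2 : Integrable (fun z : (Fin D → ℝ) × Fin D =>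
          z.1 k * z.1 k - 2 * ν k * z.1 k) π := (I2 k).sub K1
      rw [integral_add K2 (integrable_const _),
        integral_sub (I2 k) K1, integral_const_mul, integral_const,
        hmean k]
      simp
      ring
    rw [expand]
    have ha' : a ≠ 0 := ne_of_gt ha
    field_simp at H2 ⊢
    linarith [H2]
  refine ⟨part1, ?_⟩
  -- Part 2
  have Isq : ∀ k : Fin D, Integrable (fun z : (Fin D → ℝ) × Fin D => (z.1 k - ν k) ^ 2) π := by
    intro k
    refine key _ (((mx k).sub measurable_const).pow measurable_const) ⟨1, ?_⟩
    filter_upwards [hbd] with z hz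
    have hν1 : ν k ≤ 1 := by
      calc ν k ≤ ∑ j, ν j := Finset.single_le_sum (fun j _ => hν_nonneg j) (mem_univ k)
      _ = 1 := hν_sum
    have h1 : |z.1 k - ν k| ≤ 1 := by
      rw [abs_le]
      constructor <;> linarith [(hz k).1, (hz k).2, hν_nonneg k, hν1]
    calc |(z.1 k - ν k) ^ 2| = |z.1 k - ν k| ^ 2 := by rw [abs_pow]
    _ ≤ 1 ^ 2 := by gcongr
    _ = 1 := one_pow 2
  have hsum_int : ∫ z, (∑ k, (z.1 k - ν k) ^ 2) ∂π
      = ∑ k, ∫ z, (z.1 k - ν k) ^ 2 ∂π :=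
    integral_finset_sum _ fun k _ => Isq k
  have hsumh : ∑ k, ∫ z, z.1 k * h k z.2 ∂π = ∫ z, (∑ k, z.1 k * h k z.2) ∂π :=
    (integral_finset_sum _ fun k _ => I3 k).symm
  set m : ℝ := ⨅ i : Fin D, ⨅ j : Fin D, h i j with hm
  have hm_le : ∀ i j, m ≤ h i j := by
    intro i j
    refine le_trans (ciInf_le (Set.Finite.bddBelow (Set.finite_range _)) i) ?_
    exact ciInf_le (Set.Finite.bddBelow (Set.finite_range _)) j
  have hlow : m ≤ ∫ z, (∑ k, z.1 k * h k z.2) ∂π := by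
    have : ∫ z, (m : ℝ) ∂π ≤ ∫ z, (∑ k, z.1 k * h k z.2) ∂π := by
      refine integral_mono_ae (integrable_const m)
        (integrable_finset_sum _ fun k _ => I3 k) ?_
      filter_upwards [hsupp] with z hz
      calc m = ∑ k, z.1 k * m := by rw [← Finset.sum_mul, hz.2, one_mul]
      _ ≤ ∑ k, z.1 k * h k z.2 :=
        Finset.sum_le_sum fun k _ => mul_le_mul_of_nonneg_left (hm_le k z.2) (hz.1 k)
    simpa using this
  rw [hsum_int]
  calc ∑ k, ∫ z, (z.1 k - ν k) ^ 2 ∂π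
      = a⁻¹ * ((∑ k, h k k * ν k) - ∫ z, (∑ k, z.1 k * h k z.2) ∂π) := by
        simp only [part1]
        rw [← Finset.mul_sum, Finset.sum_sub_distrib, hsumh]
  _ ≤ a⁻¹ * ((∑ k, h k k * ν k) - m) := by
        apply mul_le_mul_of_nonneg_left _ (inv_nonneg.mpr (le_of_lt ha))
        linarith [hlow]
  _ = ((∑ k, h k k * ν k) - m) / a := by rw [div_eq_inv_mul]
end
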